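/- arXiv:1910.04360 — 3 statements merged into one kernel-verified Lean document; each statement's English description precedes it below -/
import Mathlib

section
/- Let (E, 𝓘) be a set-system and let (U, V) be a partition of E. If the relation ∼_U has at most q equivalence classes, then the relation ∼_V has at most 2^q equivalence classes. -/
open scoped Classical

/-- A set-system: a finite ground set `E` together with a family `Ind` of subsets of `E`,
called the independent sets. -/
structure SetSystem (α : Type) where
  E : Finset α
  Ind : Set (Finset α)
  ind_subset : ∀ X ∈ Ind, X ⊆ E

namespace SetSystem

variable {α : Type}

/-- The relation `X ∼_U X'`: for every `Z ⊆ E − U`, `X ∪ Z` is independent iff `X' ∪ Z` is. -/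
def Eqv (S : SetSystem α) (U : Finset α) (X X' : Finset α) : Prop :=
  ∀ Z : Finset α, Z ⊆ S.E \ U → ((X ∪ Z) ∈ S.Ind ↔ (X' ∪ Z) ∈ S.Ind)

/-- `∼_U` as a setoid on the subsets of `U`. -/
def eqvSetoid (S : SetSystem α) (U : Finset α) : Setoid {X : Finset α // X ⊆ U} where
  r X X' := S.Eqv U X.1 X'.1
  iseqv := ⟨fun _ _ _ => Iff.rfl, fun h Z hZ => (h Z hZ).symm,
    fun h h' Z hZ => (h Z hZ).trans (h' Z hZ)⟩

/-- The number of equivalence classes of `∼_U` on the subsets of `U`. -/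
noncomputable def numClasses (S : SetSystem α) (U : Finset α) : ℕ :=
  Nat.card (Quotient (S.eqvSetoid U))

end SetSystem

/-- A decomposition of a finite ground set `E`: a subcubic tree (every vertex has degree
one or three) together with a bijection from `E` to the set of leaves (degree-one vertices). -/
structure Decomp (α : Type) (E : Finset α) where
  V : Type
  [fintypeV : Fintype V]
  [decEqV : DecidableEq V]
  G : SimpleGraph V
  [decAdj : DecidableRel G.Adj]
  isTree : G.IsTree
  subcubic : ∀ v : V, G.degree v = 1 ∨ G.degree v = 3
  leaf : α → V
  leaf_degree : ∀ a ∈ E, G.degree (leaf a) = 1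
  leaf_injOn : Set.InjOn leaf ↑E
  leaf_surj : ∀ v : V, G.degree v = 1 → ∃ a ∈ E, leaf a = v

namespace Decomp

attribute [instance] fintypeV decEqV decAdj

variable {α : Type} {E : Finset α}

/-- The set `U ⊆ E` is displayed by an edge `uv` of the decomposition: it consists of those
elements of `E` whose leaf lies in the component of `T − uv` containing `u`. -/
def Displays (D : Decomp α E) (U : Finset α) : Prop :=
  U ⊆ E ∧ ∃ u v : D.V, D.G.Adj u v ∧
    ∀ a ∈ E, (a ∈ U ↔ (D.G.deleteEdges {s(u, v)}).Reachable (D.leaf a) u)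

end Decomp

namespace SetSystem

variable {α : Type}

/-- The decomposition-width of a set-system: the least `k` such that some decomposition has
all displayed sets `U` with at most `k` equivalence classes under `∼_U`. -/
noncomputable def dw (S : SetSystem α) : ℕ :=
  sInf {k : ℕ | ∃ D : Decomp α S.E, ∀ U : Finset α, D.Displays U → S.numClasses U ≤ k}

end SetSystem

namespace Matroid

variable {α : Type}

/-- The set-system of independent sets of a matroid on a finite type. -/
noncomputable def toSetSystem [Fintype α] (M : Matroid α) : SetSystem α where
  E := M.E.toFinite.toFinset
  Ind := {X : Finset α | M.Indep ↑X}
  ind_subset := fun _X hX _a ha =>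
    (Set.Finite.mem_toFinset _).2 (hX.subset_ground (Finset.mem_coe.2 ha))

/-- The decomposition-width of a matroid. -/
noncomputable def dw [Fintype α] (M : Matroid α) : ℕ := M.toSetSystem.dw

/-- The rank of a set in a matroid: the largest size of an independent subset. -/
noncomputable def rank [Fintype α] (M : Matroid α) (U : Set α) : ℕ :=
  sSup {n : ℕ | ∃ X : Finset α, ↑X ⊆ U ∧ M.Indep ↑X ∧ X.card = n}

/-- The connectivity function `λ_M(U) = r(U) + r(E − U) − r(M)`. -/
noncomputable def lambda [Fintype α] (M : Matroid α) (U : Set α) : ℕ :=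
  M.rank U + M.rank (M.E \ U) - M.rank M.E

/-- The branch-width of a matroid: the least `k` such that some decomposition of the ground
set has `λ_M(U) + 1 ≤ k` for every displayed set `U`. -/
noncomputable def bw [Fintype α] (M : Matroid α) : ℕ :=
  sInf {k : ℕ | ∃ D : Decomp α M.toSetSystem.E,
    ∀ U : Finset α, D.Displays U → M.lambda ↑U + 1 ≤ k}

/-- Deletion of a set of elements from a matroid. -/
def del (M : Matroid α) (D : Set α) : Matroid α := M ↾ (M.E \ D)

/-- Contraction of a set of elements in a matroid, defined via duality. -/
def con (M : Matroid α) (C : Set α) : Matroid α := (M✶ ↾ (M.E \ C))✶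

/-- `N` is a minor of `M`: `N` is obtained from `M` by contractions and deletions. -/
def IsMinorOf (N M : Matroid α) : Prop :=
  ∃ C D : Set α, C ⊆ M.E ∧ D ⊆ M.E ∧ Disjoint C D ∧ N = (M.con C).del D

/-- A pigeonhole class of matroids: every subclass of bounded branch-width has bounded
decomposition-width. -/
def PigeonholeClass [Fintype α] (𝓜 : Set (Matroid α)) : Prop :=
  ∀ lam : ℕ, 0 < lam → ∃ ρ : ℕ, ∀ M ∈ 𝓜, M.bw ≤ lam → M.dw ≤ ρ

end Matroid

/-- A `Σ`-tree: a finite full binary tree with `Γ`-labelled vertices. -/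
inductive STree (Γ : Type) : Type
  | leaf : Γ → STree Γ
  | node : Γ → STree Γ → STree Γ → STree Γ

/-- A tree automaton with alphabet `Γ`, state set `Q`, accepting states `accept`, and
(partial) transition rules `δ0` and `δ2`. -/
structure TreeAut (Γ : Type) (Q : Type) where
  accept : Finset Q
  δ0 : Γ → Option (Finset Q)
  δ2 : Γ → Q → Q → Option (Finset Q)

namespace STree

variable {Γ : Type}

/-- The number of leaves of a tree. -/
def leafCount : STree Γ → ℕ
  | .leaf _ => 1
  | .node _ l r => l.leafCount + r.leafCount

/-- `Subtree s t` means `s` is the subtree of `t` rooted at one of the vertices of `t`. -/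
inductive Subtree : STree Γ → STree Γ → Prop
  | refl (t : STree Γ) : Subtree t t
  | left {s l r : STree Γ} {a : Γ} : Subtree s l → Subtree s (.node a l r)
  | right {s l r : STree Γ} {a : Γ} : Subtree s r → Subtree s (.node a l r)

/-- Relabel the vertices of a tree: each leaf label is transformed by `f` applied to its
left-to-right index (offset by the second argument), internal labels by `g`. -/
def relabel {Γ' : Type} (f : ℕ → Γ → Γ') (g : Γ → Γ') : STree Γ → ℕ → STree Γ'
  | .leaf a, k => .leaf (f k a)
  | .node a l r, k => .node (g a) (l.relabel f g k) (r.relabel f g (k + l.leafCount))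

end STree

namespace TreeAut

variable {Γ Q : Type}

/-- The run of a tree automaton on a `Σ`-tree, computed bottom-up: a leaf receives
`δ0` of its label, an internal vertex the union of `δ2` over pairs of states at its
children (the empty set if any needed transition is undefined). -/
noncomputable def run (A : TreeAut Γ Q) : STree Γ → Finset Q
  | .leaf a => (A.δ0 a).getD ∅
  | .node a l r =>
      if ∀ qL ∈ A.run l, ∀ qR ∈ A.run r, (A.δ2 a qL qR).isSome then
        (A.run l).biUnion fun qL => (A.run r).biUnion fun qR => (A.δ2 a qL qR).getD ∅
      else ∅

/-- The automaton accepts a tree if the set of states assigned to the root contains an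
accepting state. -/
def Accepts (A : TreeAut Γ Q) (t : STree Γ) : Prop :=
  ∃ q ∈ A.run t, q ∈ A.accept

/-- A deterministic automaton: every image of `δ0` and `δ2` is a singleton. -/
def Deterministic (A : TreeAut Γ Q) : Prop :=
  (∀ a s, A.δ0 a = some s → s.card = 1) ∧
    (∀ a q₁ q₂ s, A.δ2 a q₁ q₂ = some s → s.card = 1)

end TreeAut

/-- The alphabet `Σ ∪ Σ × {0,1}^I`. -/
abbrev EncAlph (Γ : Type) (I : Finset ℕ) : Type := Γ ⊕ Γ × ({j // j ∈ I} → Bool)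

/-- `enc(T, σ, φ, {Y_j}_{j ∈ I})`: relabel each leaf `v` of the tree with `(σ(v), s)`, where
`s(j) = 1` iff `φ⁻¹(v) ∈ Y_j`; internal vertices keep their labels. -/
noncomputable def enc {α Γ : Type} (E : Finset α) (t : STree Γ)
    (φ : {a // a ∈ E} ≃ Fin t.leafCount) (I : Finset ℕ)
    (Y : {j // j ∈ I} → Finset α) : STree (EncAlph Γ I) :=
  t.relabel
    (fun k a => Sum.inr (a, fun j =>
      if h : k < t.leafCount then
        decide ((φ.symm ⟨k, h⟩ : {a // a ∈ E}).1 ∈ Y j) else false))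
    Sum.inl 0

/-- An `I`-ary automaton: `δ0` is defined only on leaf labels from `Σ × {0,1}^I`. -/
def TreeAut.IsIary {Γ Q : Type} (I : Finset ℕ) (A : TreeAut (EncAlph Γ I) Q) : Prop :=
  ∀ a : Γ, A.δ0 (Sum.inl a) = none

/-- The set-system `M(A, T, σ, φ)` determined by an `{i}`-ary automaton `A` and a parse
tree: a subset `Y ⊆ E` is independent iff `A` accepts `enc(T, σ, φ, {Y})`. -/
noncomputable def systemOf {α Γ Q : Type} (i : ℕ) (A : TreeAut (EncAlph Γ {i}) Q)
    (E : Finset α) (t : STree Γ) (φ : {a // a ∈ E} ≃ Fin t.leafCount) : SetSystem α where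
  E := E
  Ind := {Y : Finset α | Y ⊆ E ∧ A.Accepts (enc E t φ {i} fun _ => Y)}
  ind_subset := fun _ hY => hY.1

/-- A class of set-systems is automatic: there is a single `{i}`-ary tree automaton which
recognises independence in every member, via a suitable parse tree for each member. -/
def Automatic {α : Type} (𝓜 : Set (SetSystem α)) : Prop :=
  ∃ (Γ : Type) (_ : Fintype Γ) (Q : Type) (_ : Fintype Q) (i : ℕ)
    (A : TreeAut (EncAlph Γ {i}) Q), A.IsIary {i} ∧
      ∀ S ∈ 𝓜, ∃ (t : STree Γ) (φ : {a // a ∈ S.E} ≃ Fin t.leafCount),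
        S = systemOf i A S.E t φ

/-- Formulas of counting monadic second-order logic `CMS₀`, with set variables `X_n`:
atomic formulas `Ind(X_i)`, `X_i ⊆ X_j` and `|X_i|_{p,q}`, closed under `¬`, `∧`, `∃`. -/
inductive CMS0 : Type
  | ind : ℕ → CMS0
  | subset : ℕ → ℕ → CMS0
  | card : ℕ → ℕ → ℕ → CMS0
  | not : CMS0 → CMS0
  | and : CMS0 → CMS0 → CMS0
  | ex : ℕ → CMS0 → CMS0

namespace CMS0

/-- The free variables of a `CMS₀` formula. -/
def free : CMS0 → Finset ℕ
  | .ind i => {i}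
  | .subset i j => {i, j}
  | .card i _ _ => {i}
  | .not φ => φ.free
  | .and φ ψ => φ.free ∪ ψ.free
  | .ex i φ => φ.free.erase i

/-- Satisfaction of a `CMS₀` formula by a set-system under an interpretation `θ` assigning
subsets of the ground set to variables. -/
def Sat {α : Type} (S : SetSystem α) (θ : ℕ → Finset α) : CMS0 → Prop
  | .ind i => θ i ∈ S.Ind
  | .subset i j => θ i ⊆ θ j
  | .card i p q => (θ i).card % q = p
  | .not φ => ¬ Sat S θ φ
  | .and φ ψ => Sat S θ φ ∧ Sat S θ ψ
  | .ex i φ => ∃ Y : Finset α, Y ⊆ S.E ∧ Sat S (Function.update θ i Y) φ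

end CMS0

/-! A subset `Y ⊆ V` is determined up to `∼_V` by its *profile*: the set of classes of `∼_U`
whose members `X` make `X ∪ Y` independent. Since `E − V = U`, two subsets of `V` with the
same profile are `∼_V`-equivalent, so there are at most as many `∼_V`-classes as profiles,
i.e. at most `2 ^ q`. -/

namespace SetSystem

variable {α : Type} (S : SetSystem α) {U V : Finset α}

def profile (hV : V ⊆ S.E \ U) (Y : {Y : Finset α // Y ⊆ V}) :
    Quotient (S.eqvSetoid U) → Prop :=
  Quotient.lift (fun X => X.1 ∪ Y.1 ∈ S.Ind) fun _ _ hX => propext (hX Y.1 (Y.2.trans hV))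

theorem eqvSetoid_eq_ker_profile (hV : V ⊆ S.E \ U) (hU : S.E \ V = U) :
    S.eqvSetoid V = Setoid.ker (S.profile hV) := by
  ext Y Y'
  rw [Setoid.ker_def]
  constructor
  · intro hY
    funext c
    induction c using Quotient.ind with
    | _ X =>
      show (X.1 ∪ Y.1 ∈ S.Ind) = (X.1 ∪ Y'.1 ∈ S.Ind)
      rw [Finset.union_comm X.1, Finset.union_comm X.1]
      exact propext (hY X.1 (hU ▸ X.2))
  · intro hprofile Z hZ
    have hZ' := congrFun hprofile ⟦⟨Z, hU ▸ hZ⟩⟧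
    rw [Finset.union_comm Y.1, Finset.union_comm Y'.1]
    exact hZ'.to_iff

theorem numClasses_le_two_pow (hV : V ⊆ S.E \ U) (hU : S.E \ V = U) :
    S.numClasses V ≤ 2 ^ S.numClasses U := by
  calc S.numClasses V = Nat.card (Quotient (Setoid.ker (S.profile hV))) := by
        rw [numClasses, S.eqvSetoid_eq_ker_profile hV hU]
    _ ≤ Nat.card (Quotient (S.eqvSetoid U) → Prop) :=
        Nat.card_le_card_of_injective _ (Setoid.kerLift_injective _)
    _ = 2 ^ S.numClasses U := by
        rw [Nat.card_fun, Nat.card_eq_fintype_card (α := Prop), Fintype.card_prop, numClasses]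

end SetSystem

/-- Proposition `shadow`: if `(U, V)` partitions `E` and `∼_U` has at most
`q` equivalence classes, then `∼_V` has at most `2 ^ q` equivalence classes. -/
theorem statement_1 {α : Type} (S : SetSystem α) (U V : Finset α)
    (hdisj : Disjoint U V) (hpart : U ∪ V = S.E) (q : ℕ)
    (hU : S.numClasses U ≤ q) :
    S.numClasses V ≤ 2 ^ q := by
  have hVU : V ⊆ S.E \ U := by rw [← hpart, Finset.union_sdiff_cancel_left hdisj]
  have hUV : S.E \ V = U := by rw [← hpart, Finset.union_sdiff_cancel_right hdisj]
  exact (S.numClasses_le_two_pow hVU hUV).trans (Nat.pow_le_pow_right two_pos hU)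
end

section
/- Let x be an element of a finite matroid M. Then dw(M \ x) ≤ dw(M), where M \ x denotes the matroid obtained by deleting x. -/
open scoped Classical

/-!
Take a decomposition of `M` of optimal width (one exists as soon as `E - x` has a decomposition:
split any leaf into two; otherwise `dw (M \ x) = sInf ∅ = 0`). Since `E - x` has at least two
elements, the neighbour `w` of the leaf of `x` has degree three, so deleting that leaf and
suppressing `w` gives a decomposition of `E - x`. Each of its edges comes from an edge of the old
tree, so every set it displays is `U - x` for a displayed set `U` of the old one. Finally, subsets
of `U - x` that are `∼_U`-equivalent in `M` are `∼_(U - x)`-equivalent in `M \ x`, so `U - x` has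
at most as many classes in `M \ x` as `U` has in `M`.
-/

namespace SimpleGraph

variable {V W : Type}

section

variable {G : SimpleGraph V}

theorem Reachable.lift {H : SimpleGraph W} (f : V → W)
    (hf : ∀ u v, G.Adj u v → H.Reachable (f u) (f v)) {u v : V} (h : G.Reachable u v) :
    H.Reachable (f u) (f v) := by
  rw [reachable_iff_reflTransGen] at h ⊢
  exact Relation.ReflTransGen.lift' f (fun p q hpq => (reachable_iff_reflTransGen _ _).1
    (hf p q hpq)) _ _ h

theorem degree_eq_ncard (v : V) [Fintype (G.neighborSet v)] :
    G.degree v = (G.neighborSet v).ncard := by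
  rw [← card_neighborSet_eq_degree, ← Nat.card_eq_fintype_card, Nat.card_coe_set_eq]

theorem isTree_of_connected_of_sum_degrees [Fintype V] [DecidableRel G.Adj] (hG : G.Connected)
    (hsum : ∑ v, G.degree v + 2 = 2 * Fintype.card V) : G.IsTree := by
  rw [isTree_iff_connected_and_card, Nat.card_eq_fintype_card, Nat.card_eq_fintype_card,
    ← edgeFinset_card]
  rw [sum_degrees_eq_twice_card_edges] at hsum
  exact ⟨hG, by omega⟩

theorem IsTree.sum_degrees [Fintype V] [DecidableRel G.Adj] (hG : G.IsTree) :
    ∑ v, G.degree v + 2 = 2 * Fintype.card V := by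
  rw [sum_degrees_eq_twice_card_edges, ← hG.card_edgeFinset]
  ring

theorem IsAcyclic.not_adj_of_adj_of_adj (hG : G.IsAcyclic) {w a b : V} (ha : G.Adj w a)
    (hb : G.Adj w b) : ¬ G.Adj a b := by
  intro h
  have haw : (G.deleteEdges {s(a, b)}).Adj a w :=
    deleteEdges_adj.2 ⟨ha.symm, by simp [hb.ne, h.ne]⟩
  have hwb : (G.deleteEdges {s(a, b)}).Adj w b :=
    deleteEdges_adj.2 ⟨hb, by simp [ha.ne, h.ne']⟩
  exact isAcyclic_iff_forall_adj_isBridge.1 hG h (haw.reachable.trans hwb.reachable)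

theorem Connected.eq_or_eq_of_adj_iff (hG : G.Connected) {ℓ w : V}
    (hℓ : ∀ z, G.Adj ℓ z ↔ z = w) (hw : ∀ z, G.Adj w z ↔ z = ℓ) (v : V) : v = ℓ ∨ v = w := by
  have h := (reachable_iff_reflTransGen ℓ v).1 (hG ℓ v)
  induction h with
  | refl => exact Or.inl rfl
  | tail _ hadj ih =>
    rcases ih with rfl | rfl
    · exact Or.inr ((hℓ _).1 hadj)
    · exact Or.inl ((hw _).1 hadj)

end

section RemoveLeaf

structure LeafAtDegreeThree (G : SimpleGraph V) (ℓ w a b : V) : Prop where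
  adj_leaf_iff : ∀ z, G.Adj ℓ z ↔ z = w
  adj_center_iff : ∀ z, G.Adj w z ↔ z = ℓ ∨ z = a ∨ z = b
  a_ne_b : a ≠ b
  a_ne_leaf : a ≠ ℓ
  b_ne_leaf : b ≠ ℓ
  not_adj : ¬ G.Adj a b

def removeLeaf (G : SimpleGraph V) (ℓ w a b : V) : SimpleGraph ({ℓ, w}ᶜ : Set V) :=
  (G ⊔ edge a b).induce {ℓ, w}ᶜ

variable {G : SimpleGraph V}

theorem removeLeaf_comm (ℓ w a b : V) : G.removeLeaf ℓ w a b = G.removeLeaf ℓ w b a := by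
  rw [removeLeaf, edge_comm, removeLeaf]

namespace LeafAtDegreeThree

variable {ℓ w a b : V}

theorem coe_ne_leaf_and_ne_center (u : ({ℓ, w}ᶜ : Set V)) : (u : V) ≠ ℓ ∧ (u : V) ≠ w := by
  have := u.2
  simp only [Set.mem_compl_iff, Set.mem_insert_iff, Set.mem_singleton_iff, not_or] at this
  exact this

theorem sym2_coe_eq_iff {p q u v : ({ℓ, w}ᶜ : Set V)} :
    s((p : V), (q : V)) = s((u : V), (v : V)) ↔ s(p, q) = s(u, v) := by
  simp only [← Sym2.map_mk]
  exact (Sym2.map.injective Subtype.val_injective).eq_iff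

variable (C : G.LeafAtDegreeThree ℓ w a b)
include C

theorem symm : G.LeafAtDegreeThree ℓ w b a where
  adj_leaf_iff := C.adj_leaf_iff
  adj_center_iff z := by rw [C.adj_center_iff]; tauto
  a_ne_b := C.a_ne_b.symm
  a_ne_leaf := C.b_ne_leaf
  b_ne_leaf := C.a_ne_leaf
  not_adj h := C.not_adj h.symm

theorem adj_a : G.Adj w a := (C.adj_center_iff a).2 (by simp)
theorem adj_b : G.Adj w b := (C.adj_center_iff b).2 (by simp)
theorem adj_leaf : G.Adj w ℓ := (C.adj_center_iff ℓ).2 (by simp)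

theorem a_mem : a ∈ ({ℓ, w}ᶜ : Set V) := by simp [C.a_ne_leaf, C.adj_a.ne']
theorem b_mem : b ∈ ({ℓ, w}ᶜ : Set V) := by simp [C.b_ne_leaf, C.adj_b.ne']

theorem removeLeaf_adj {u v : ({ℓ, w}ᶜ : Set V)} :
    (G.removeLeaf ℓ w a b).Adj u v ↔ G.Adj u v ∨ (↑u = a ∧ ↑v = b ∨ ↑u = b ∧ ↑v = a) := by
  simp only [removeLeaf, induce_adj, sup_adj, edge_adj]
  constructor
  · rintro (h | ⟨h, -⟩) <;> [exact Or.inl h; exact Or.inr h]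
  · rintro (h | h)
    · exact Or.inl h
    · refine Or.inr ⟨h, ?_⟩
      rcases h with ⟨hu, hv⟩ | ⟨hu, hv⟩ <;> rw [hu, hv]
      exacts [C.a_ne_b, C.a_ne_b.symm]

noncomputable def retract (v : V) : ({ℓ, w}ᶜ : Set V) :=
  if h : v ∈ ({ℓ, w}ᶜ : Set V) then ⟨v, h⟩ else ⟨a, C.a_mem⟩

theorem retract_of_mem {v : V} (hv : v ∈ ({ℓ, w}ᶜ : Set V)) :
    C.retract v = ⟨v, hv⟩ := dif_pos hv

theorem retract_coe (u : ({ℓ, w}ᶜ : Set V)) : C.retract u = u := C.retract_of_mem u.2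

theorem retract_of_not_mem {v : V} (hv : v ∉ ({ℓ, w}ᶜ : Set V)) :
    C.retract v = ⟨a, C.a_mem⟩ := dif_neg hv

theorem retract_center : C.retract w = C.retract a := by
  rw [C.retract_of_not_mem (by simp), C.retract_of_mem C.a_mem]

theorem reachable_retract {d : Set (Sym2 V)} {d' : Set (Sym2 ({ℓ, w}ᶜ : Set V))}
    (hold : ∀ p q : ({ℓ, w}ᶜ : Set V), G.Adj p q → s(↑p, ↑q) ∉ d → s(p, q) ∉ d')
    (hnew : s(w, b) ∉ d → s(C.retract a, C.retract b) ∉ d') {u v : V}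
    (h : (G.deleteEdges d).Reachable u v) :
    ((G.removeLeaf ℓ w a b).deleteEdges d').Reachable (C.retract u) (C.retract v) := by
  have hw : w ∉ ({ℓ, w}ᶜ : Set V) := by simp
  have hℓ : ℓ ∉ ({ℓ, w}ᶜ : Set V) := by simp
  -- Edges at `w` other than `w b` collapse onto `a`; the edge `w b` becomes the new edge `a b`.
  have step : ∀ p q, G.Adj p q → s(p, q) ∉ d → q ∈ ({ℓ, w}ᶜ : Set V) →
      ((G.removeLeaf ℓ w a b).deleteEdges d').Reachable (C.retract p) (C.retract q) := by
    intro p q hpq hd hq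
    by_cases hp : p ∈ ({ℓ, w}ᶜ : Set V)
    · rw [C.retract_of_mem hp, C.retract_of_mem hq]
      exact (deleteEdges_adj.2 ⟨(C.removeLeaf_adj).2 (Or.inl hpq),
        hold ⟨p, hp⟩ ⟨q, hq⟩ hpq hd⟩).reachable
    obtain rfl | rfl : p = ℓ ∨ p = w := by simp at hp; tauto
    · exact absurd ((C.adj_leaf_iff q).1 hpq ▸ hq) hw
    rcases (C.adj_center_iff q).1 hpq with rfl | rfl | rfl
    · exact absurd hq hℓ
    · rw [C.retract_of_not_mem hw, C.retract_of_mem hq]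
    · rw [C.retract_of_not_mem hw, C.retract_of_mem hq]
      refine (deleteEdges_adj.2 ⟨C.removeLeaf_adj.2 (Or.inr (Or.inl ⟨rfl, rfl⟩)), ?_⟩).reachable
      rw [← C.retract_of_mem C.a_mem, ← C.retract_of_mem hq]
      exact hnew hd
  refine h.lift _ fun p q hpq => ?_
  obtain ⟨hpq, hd⟩ := deleteEdges_adj.1 hpq
  by_cases hq : q ∈ ({ℓ, w}ᶜ : Set V)
  · exact step p q hpq hd hq
  by_cases hp : p ∈ ({ℓ, w}ᶜ : Set V)
  · exact (step q p hpq.symm (by rwa [Sym2.eq_swap]) hp).symm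
  rw [C.retract_of_not_mem hp, C.retract_of_not_mem hq]

theorem reachable_coe {d : Set (Sym2 V)} {d' : Set (Sym2 ({ℓ, w}ᶜ : Set V))}
    (hold : ∀ p q : ({ℓ, w}ᶜ : Set V), G.Adj p q → s(p, q) ∉ d' → s(↑p, ↑q) ∉ d)
    (hnew : s(C.retract a, C.retract b) ∉ d' → s(a, w) ∉ d ∧ s(w, b) ∉ d)
    {u v : ({ℓ, w}ᶜ : Set V)} (h : ((G.removeLeaf ℓ w a b).deleteEdges d').Reachable u v) :
    (G.deleteEdges d).Reachable u v := by
  rw [C.retract_of_mem C.a_mem, C.retract_of_mem C.b_mem] at hnew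
  have path (h : s(a, w) ∉ d ∧ s(w, b) ∉ d) : (G.deleteEdges d).Reachable a b :=
    (deleteEdges_adj.2 ⟨C.adj_a.symm, h.1⟩).reachable.trans
      (deleteEdges_adj.2 ⟨C.adj_b, h.2⟩).reachable
  refine h.lift _ fun p q hpq => ?_
  obtain ⟨hpq, hd⟩ := deleteEdges_adj.1 hpq
  rcases (C.removeLeaf_adj).1 hpq with hG | ⟨hp, hq⟩ | ⟨hp, hq⟩
  · exact (deleteEdges_adj.2 ⟨hG, hold p q hG hd⟩).reachable
  · obtain rfl : p = ⟨a, C.a_mem⟩ := Subtype.ext hp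
    obtain rfl : q = ⟨b, C.b_mem⟩ := Subtype.ext hq
    exact path (hnew hd)
  · obtain rfl : p = ⟨b, C.b_mem⟩ := Subtype.ext hp
    obtain rfl : q = ⟨a, C.a_mem⟩ := Subtype.ext hq
    exact (path (hnew (by rwa [Sym2.eq_swap]))).symm

theorem reachable_removeLeaf_deleteEdges_iff {u v : ({ℓ, w}ᶜ : Set V)} (huv : G.Adj u v)
    (p : ({ℓ, w}ᶜ : Set V)) :
    ((G.removeLeaf ℓ w a b).deleteEdges {s(u, v)}).Reachable p u ↔
      (G.deleteEdges {s((u : V), (v : V))}).Reachable p u := by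
  constructor
  · refine C.reachable_coe (d := {s((u : V), (v : V))}) (d' := {s(u, v)})
      (fun p q _ hpq hmem => hpq (sym2_coe_eq_iff.1 hmem)) fun _ => ?_
    simp [(coe_ne_leaf_and_ne_center u).2.symm, (coe_ne_leaf_and_ne_center v).2.symm]
  · intro h
    have hab : s(C.retract a, C.retract b) ≠ s(u, v) := by
      rw [C.retract_of_mem C.a_mem, C.retract_of_mem C.b_mem, Ne, ← sym2_coe_eq_iff]
      intro hab
      exact C.not_adj (by rwa [← mem_edgeSet, hab])
    simpa only [C.retract_coe] using C.reachable_retract (d := {s((u : V), (v : V))})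
      (d' := {s(u, v)}) (fun p q _ hpq hmem => hpq (sym2_coe_eq_iff.2 hmem)) (fun _ => hab) h

theorem reachable_removeLeaf_deleteEdges_iff_of_coe_eq {a' b' : ({ℓ, w}ᶜ : Set V)}
    (ha : (a' : V) = a) (hb : (b' : V) = b) (p : ({ℓ, w}ᶜ : Set V)) :
    ((G.removeLeaf ℓ w a b).deleteEdges {s(a', b')}).Reachable p a' ↔
      (G.deleteEdges {s(w, b)}).Reachable p w := by
  obtain rfl : a' = C.retract a := by rw [C.retract_of_mem C.a_mem]; exact Subtype.ext ha
  obtain rfl : b' = C.retract b := by rw [C.retract_of_mem C.b_mem]; exact Subtype.ext hb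
  have haw : (G.deleteEdges {s(w, b)}).Adj a w :=
    deleteEdges_adj.2 ⟨C.adj_a.symm, by simp [C.a_ne_b, C.adj_a.ne']⟩
  constructor
  · intro h
    refine (C.reachable_coe (d := {s(w, b)}) (d' := {s(C.retract a, C.retract b)})
      (fun p q _ _ hmem => ?_) (fun h => (h rfl).elim) h).trans ?_
    · simp [(coe_ne_leaf_and_ne_center p).2, (coe_ne_leaf_and_ne_center q).2] at hmem
    · simpa [C.retract_of_mem C.a_mem] using haw.reachable
  · intro h
    have := C.reachable_retract (d := {s(w, b)}) (d' := {s(C.retract a, C.retract b)})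
      (fun p q hpq _ hmem => C.not_adj ?_) (fun h => (h rfl).elim) h
    · rwa [C.retract_coe, C.retract_center] at this
    have hab : s((p : V), (q : V)) = s(a, b) := by
      rw [sym2_coe_eq_iff.2 (Set.mem_singleton_iff.1 hmem), ha, hb]
    rw [← mem_edgeSet, ← hab]
    exact hpq

theorem isTree_removeLeaf (hG : G.IsTree) : (G.removeLeaf ℓ w a b).IsTree := by
  have hbridge := isAcyclic_iff_forall_adj_isBridge.1 hG.isAcyclic
  refine ⟨?_, isAcyclic_iff_forall_adj_isBridge.2 fun u v huv h => ?_⟩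
  · have : Nonempty ({ℓ, w}ᶜ : Set V) := ⟨⟨a, C.a_mem⟩⟩
    refine ⟨fun u v => ?_⟩
    have := C.reachable_retract (d := ∅) (d' := ∅) (by simp) (by simp)
      (by simpa using hG.connected u v)
    rwa [C.retract_coe, C.retract_coe, deleteEdges_empty] at this
  -- each new edge is a bridge because the edge of `G` it comes from is one
  rcases C.removeLeaf_adj.1 huv with hG' | ⟨hu, hv⟩ | ⟨hu, hv⟩
  · exact hbridge hG' ((C.reachable_removeLeaf_deleteEdges_iff hG' v).1 h.symm).symm
  · exact hbridge C.adj_b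
      (hv ▸ (C.reachable_removeLeaf_deleteEdges_iff_of_coe_eq hu hv v).1 h.symm).symm
  · rw [removeLeaf_comm] at h
    exact hbridge C.adj_a
      (hv ▸ (C.symm.reachable_removeLeaf_deleteEdges_iff_of_coe_eq hu hv v).1 h.symm).symm

theorem exists_perm_image_neighborSet (u : ({ℓ, w}ᶜ : Set V)) :
    ∃ σ : Equiv.Perm V,
      Subtype.val '' (G.removeLeaf ℓ w a b).neighborSet u = σ '' G.neighborSet u := by
  wlog hb : (u : V) ≠ b generalizing a b
  · rw [removeLeaf_comm]
    exact this C.symm fun ha => C.a_ne_b (ha ▸ not_not.1 hb)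
  have hu := coe_ne_leaf_and_ne_center u
  have hne_leaf : ∀ z, G.Adj u z → z ≠ ℓ := fun z hz h =>
    hu.2 ((C.adj_leaf_iff u).1 (h ▸ hz.symm))
  by_cases ha : (u : V) = a
  · refine ⟨Equiv.swap w b, Set.ext fun z => ?_⟩
    simp only [Subtype.coe_image, Set.mem_ofPred_eq, mem_neighborSet, C.removeLeaf_adj, ha,
      Set.mem_image_equiv, Equiv.symm_swap]
    rcases eq_or_ne z w with rfl | hzw
    · simp [C.not_adj]
    rcases eq_or_ne z b with rfl | hzb
    · simp [C.b_mem, C.adj_a.symm]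
    rw [Equiv.swap_apply_of_ne_of_ne hzw hzb]
    exact ⟨fun ⟨_, h⟩ => h.resolve_right (by simp [hzb, C.a_ne_b]),
      fun h => ⟨by simp [hne_leaf z (ha ▸ h), hzw], Or.inl h⟩⟩
  · refine ⟨Equiv.refl V, Set.ext fun z => ?_⟩
    simp only [Subtype.coe_image, Set.mem_ofPred_eq, mem_neighborSet, C.removeLeaf_adj, ha, hb,
      Set.mem_image_equiv, Equiv.refl_symm, Equiv.refl_apply, false_and, or_false]
    refine ⟨fun ⟨_, h⟩ => h, fun h => ⟨?_, h⟩⟩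
    have hzw : z ≠ w := by
      rintro rfl
      rcases (C.adj_center_iff u).1 h.symm with h' | h' | h' <;> simp_all
    simp [hne_leaf z h, hzw]

theorem degree_removeLeaf (u : ({ℓ, w}ᶜ : Set V))
    [Fintype ((G.removeLeaf ℓ w a b).neighborSet u)] [Fintype (G.neighborSet u)] :
    (G.removeLeaf ℓ w a b).degree u = G.degree u := by
  obtain ⟨σ, hσ⟩ := C.exists_perm_image_neighborSet u
  rw [degree_eq_ncard, degree_eq_ncard, ← Set.ncard_image_of_injective _ Subtype.val_injective,
    hσ, Set.ncard_image_of_injective _ σ.injective]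

end LeafAtDegreeThree

end RemoveLeaf

section AttachTwoLeaves

def attachTwoLeaves (G : SimpleGraph V) (ℓ : V) : SimpleGraph (V ⊕ Bool) where
  Adj
    | .inl u, .inl v => G.Adj u v
    | .inl u, .inr _ => u = ℓ
    | .inr _, .inl v => v = ℓ
    | .inr _, .inr _ => False
  symm := ⟨by
    rintro (u | i) (v | j) h
    exacts [h.symm, h, h, h]⟩
  loopless := ⟨by rintro (u | i) h; exacts [G.loopless.irrefl u h, h]⟩

variable {G : SimpleGraph V} {ℓ : V}

@[simp] theorem attachTwoLeaves_adj_inl_inl {u v : V} :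
    (G.attachTwoLeaves ℓ).Adj (.inl u) (.inl v) ↔ G.Adj u v := Iff.rfl

@[simp] theorem attachTwoLeaves_adj_inl_inr {u : V} {i : Bool} :
    (G.attachTwoLeaves ℓ).Adj (.inl u) (.inr i) ↔ u = ℓ := Iff.rfl

@[simp] theorem attachTwoLeaves_adj_inr_inl {v : V} {i : Bool} :
    (G.attachTwoLeaves ℓ).Adj (.inr i) (.inl v) ↔ v = ℓ := Iff.rfl

@[simp] theorem attachTwoLeaves_adj_inr_inr {i j : Bool} :
    ¬ (G.attachTwoLeaves ℓ).Adj (.inr i) (.inr j) := id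

variable [Fintype V] [DecidableRel (G.attachTwoLeaves ℓ).Adj]

theorem degree_attachTwoLeaves_inl [DecidableRel G.Adj] (v : V) :
    (G.attachTwoLeaves ℓ).degree (.inl v) = G.degree v + if v = ℓ then 2 else 0 := by
  have : (G.attachTwoLeaves ℓ).neighborFinset (.inl v) =
      (G.neighborFinset v).disjSum (if v = ℓ then Finset.univ else ∅) := by
    ext (u | i) <;> by_cases hv : v = ℓ <;> simp [hv]
  rw [← card_neighborFinset_eq_degree, this, Finset.card_disjSum, card_neighborFinset_eq_degree]
  split_ifs <;> rfl

theorem degree_attachTwoLeaves_inr (i : Bool) : (G.attachTwoLeaves ℓ).degree (.inr i) = 1 := by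
  have : (G.attachTwoLeaves ℓ).neighborFinset (.inr i) = {.inl ℓ} := by
    ext (u | j) <;> simp
  rw [← card_neighborFinset_eq_degree, this, Finset.card_singleton]

theorem IsTree.attachTwoLeaves [DecidableRel G.Adj] (hG : G.IsTree) :
    (G.attachTwoLeaves ℓ).IsTree := by
  refine isTree_of_connected_of_sum_degrees ?_ ?_
  · have hℓ : ∀ x, (G.attachTwoLeaves ℓ).Reachable x (.inl ℓ) := by
      rintro (u | i)
      · exact (hG.connected u ℓ).lift Sum.inl fun p q hpq => Adj.reachable hpq
      · exact Adj.reachable (by simp)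
    exact ⟨fun x y => (hℓ x).trans (hℓ y).symm⟩
  · rw [Fintype.sum_sum_type]
    simp only [degree_attachTwoLeaves_inl, degree_attachTwoLeaves_inr, Finset.sum_add_distrib,
      Finset.sum_ite_eq', Finset.mem_univ, if_true, Finset.sum_const, Finset.card_univ,
      Fintype.card_bool, Fintype.card_sum, smul_eq_mul]
    have := hG.sum_degrees
    omega

end AttachTwoLeaves

end SimpleGraph

namespace Decomp

open SimpleGraph

variable {α : Type} {E : Finset α} (D : Decomp α E)

include D in
theorem two_le_card : 2 ≤ E.card := by
  obtain ⟨v⟩ := D.isTree.connected.nonempty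
  obtain ⟨u, hu⟩ :=
    (D.G.degree_pos_iff_exists_adj v).1 (by rcases D.subcubic v with h | h <;> omega)
  have : Nontrivial D.V := ⟨⟨v, u, hu.ne⟩⟩
  obtain ⟨p, q, hpq, hp, hq⟩ := D.isTree.exists_ne_and_degree_eq_one
  obtain ⟨c, hc, rfl⟩ := D.leaf_surj p hp
  obtain ⟨d, hd, rfl⟩ := D.leaf_surj q hq
  exact Finset.one_lt_card.2 ⟨c, hc, d, hd, fun h => hpq (h ▸ rfl)⟩

noncomputable def splitLeaf {c x : α} (hc : c ∈ E) (hx : x ∉ E) : Decomp α (insert x E) where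
  V := D.V ⊕ Bool
  G := D.G.attachTwoLeaves (D.leaf c)
  decAdj := Classical.decRel _
  isTree := D.isTree.attachTwoLeaves
  subcubic
    | .inl v => by
      rw [degree_attachTwoLeaves_inl]
      split_ifs with h
      · exact Or.inr (by rw [h, D.leaf_degree c hc])
      · simpa using D.subcubic v
    | .inr i => Or.inl (degree_attachTwoLeaves_inr i)
  leaf y := if y = x then .inr true else if y = c then .inr false else .inl (D.leaf y)
  leaf_degree y hy := by
    by_cases h₁ : y = x
    · rw [if_pos h₁]; exact degree_attachTwoLeaves_inr _
    by_cases h₂ : y = c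
    · rw [if_neg h₁, if_pos h₂]; exact degree_attachTwoLeaves_inr _
    have hy : y ∈ E := (Finset.mem_insert.1 hy).resolve_left h₁
    rw [if_neg h₁, if_neg h₂, degree_attachTwoLeaves_inl,
      if_neg fun h => h₂ (D.leaf_injOn hy hc h), D.leaf_degree y hy]
  leaf_injOn y hy y' hy' h := by
    by_cases h₁ : y = x <;> by_cases h₂ : y = c <;> by_cases h₁' : y' = x <;>
      by_cases h₂' : y' = c <;> simp_all
    exact D.leaf_injOn hy hy' h
  leaf_surj
    | .inl v, hv => by
      rw [degree_attachTwoLeaves_inl] at hv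
      by_cases h : v = D.leaf c
      · rw [if_pos h, h, D.leaf_degree c hc] at hv
        omega
      obtain ⟨y, hy, rfl⟩ := D.leaf_surj v (by simpa [h] using hv)
      have hyx : y ≠ x := fun h' => hx (h' ▸ hy)
      have hyc : y ≠ c := fun h' => h (h' ▸ rfl)
      exact ⟨y, Finset.mem_insert_of_mem hy, by simp [hyx, hyc]⟩
    | .inr true, _ => ⟨x, Finset.mem_insert_self x E, if_pos rfl⟩
    | .inr false, _ =>
      ⟨c, Finset.mem_insert_of_mem hc, by simp [show c ≠ x from fun h => hx (h ▸ hc)]⟩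

theorem nonempty_of_erase {x : α} (hx : x ∈ E) (D' : Decomp α (E.erase x)) :
    Nonempty (Decomp α E) := by
  obtain ⟨c, hc⟩ : (E.erase x).Nonempty := Finset.card_pos.1 (by have := D'.two_le_card; omega)
  rw [← Finset.insert_erase hx]
  exact ⟨D'.splitLeaf hc (Finset.notMem_erase x E)⟩

theorem exists_leafAtDegreeThree {x : α} (hx : x ∈ E) (hE : 3 ≤ E.card) :
    ∃ w a b, D.G.LeafAtDegreeThree (D.leaf x) w a b := by
  obtain ⟨w, hℓw, hw⟩ := degree_eq_one_iff_existsUnique_adj.1 (D.leaf_degree x hx)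
  have hℓ : ∀ z, D.G.Adj (D.leaf x) z ↔ z = w := fun z => ⟨hw z, fun h => h ▸ hℓw⟩
  -- if `w` were a leaf too, the tree would be the single edge `ℓ w`, with only two leaves
  have hdeg : D.G.degree w = 3 := by
    refine (D.subcubic w).resolve_left fun h₁ => ?_
    obtain ⟨z, -, hz⟩ := degree_eq_one_iff_existsUnique_adj.1 h₁
    have hwℓ : ∀ z', D.G.Adj w z' ↔ z' = D.leaf x :=
      fun z' => ⟨fun h => (hz z' h).trans (hz _ hℓw.symm).symm, fun h => h ▸ hℓw.symm⟩
    have hall := D.isTree.connected.eq_or_eq_of_adj_iff hℓ hwℓ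
    have : E.card ≤ 2 :=
      calc E.card = (E.image D.leaf).card := (Finset.card_image_of_injOn D.leaf_injOn).symm
        _ ≤ ({D.leaf x, w} : Finset D.V).card :=
          Finset.card_le_card fun v _ => by simpa using hall v
        _ ≤ 2 := Finset.card_le_two
    omega
  have hcard : ((D.G.neighborFinset w).erase (D.leaf x)).card = 2 := by
    rw [Finset.card_erase_of_mem (by simpa using hℓw.symm), card_neighborFinset_eq_degree, hdeg]
  obtain ⟨a, b, hab, hN⟩ := Finset.card_eq_two.1 hcard
  have hmem : ∀ z, z ∈ ({a, b} : Finset D.V) ↔ z ≠ D.leaf x ∧ D.G.Adj w z := by simp [← hN]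
  have ha := (hmem a).1 (by simp)
  have hb := (hmem b).1 (by simp)
  refine ⟨w, a, b, hℓ, fun z => ?_, hab, ha.1, hb.1,
    D.isTree.isAcyclic.not_adj_of_adj_of_adj ha.2 hb.2⟩
  by_cases hz : z = D.leaf x
  · simp [hz, hℓw.symm]
  · have := hmem z
    simp only [Finset.mem_insert, Finset.mem_singleton] at this
    simp [hz, this]

theorem exists_displays_erase_of_reachable_iff {x : α} {U' : Finset α} (hU' : U' ⊆ E.erase x)
    {p q : D.V} (hpq : D.G.Adj p q)
    (h : ∀ c ∈ E.erase x, c ∈ U' ↔ (D.G.deleteEdges {s(p, q)}).Reachable (D.leaf c) p) :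
    ∃ U, D.Displays U ∧ U' = U.erase x := by
  refine ⟨E.filter fun c => (D.G.deleteEdges {s(p, q)}).Reachable (D.leaf c) p,
    ⟨Finset.filter_subset _ _, p, q, hpq, fun c hc => by simp [hc]⟩, Finset.ext fun c => ?_⟩
  by_cases hc : c ∈ E.erase x
  · rw [h c hc]
    simp_all
  · simp only [Finset.mem_erase, Finset.mem_filter] at hc ⊢
    exact ⟨fun h => (hc (Finset.mem_erase.1 (hU' h))).elim, fun h => (hc ⟨h.1, h.2.1⟩).elim⟩

section EraseLeaf

variable {x : α} {w a b : D.V} (C : D.G.LeafAtDegreeThree (D.leaf x) w a b)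
include C

theorem leaf_mem_compl {y : α} (hx : x ∈ E) (hy : y ∈ E.erase x) :
    D.leaf y ∈ ({D.leaf x, w}ᶜ : Set D.V) := by
  obtain ⟨hyx, hy⟩ := Finset.mem_erase.1 hy
  have hℓ : D.leaf y ≠ D.leaf x := fun h => hyx (D.leaf_injOn hy hx h)
  have hw : D.leaf y ≠ w := by
    intro h
    obtain ⟨z, -, hz⟩ := degree_eq_one_iff_existsUnique_adj.1 (h ▸ D.leaf_degree y hy)
    exact C.a_ne_leaf ((hz a C.adj_a).trans (hz _ C.adj_leaf).symm)
  simp [hℓ, hw]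

noncomputable def eraseLeaf (hx : x ∈ E) : Decomp α (E.erase x) where
  V := ({D.leaf x, w}ᶜ : Set D.V)
  G := D.G.removeLeaf (D.leaf x) w a b
  decAdj := Classical.decRel _
  isTree := C.isTree_removeLeaf D.isTree
  subcubic v := by rw [C.degree_removeLeaf]; exact D.subcubic v
  leaf := C.retract ∘ D.leaf
  leaf_degree y hy := by
    rw [Function.comp_apply, C.retract_of_mem (D.leaf_mem_compl C hx hy), C.degree_removeLeaf]
    exact D.leaf_degree y (Finset.mem_of_mem_erase hy)
  leaf_injOn y hy y' hy' h := by
    rw [Function.comp_apply, Function.comp_apply, C.retract_of_mem (D.leaf_mem_compl C hx hy),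
      C.retract_of_mem (D.leaf_mem_compl C hx hy'), Subtype.mk.injEq] at h
    exact D.leaf_injOn (Finset.mem_of_mem_erase hy) (Finset.mem_of_mem_erase hy') h
  leaf_surj v hv := by
    rw [C.degree_removeLeaf] at hv
    obtain ⟨y, hy, hyv⟩ := D.leaf_surj v hv
    have hyx : y ≠ x := fun h => (Set.mem_compl_iff _ _).1 v.2 (by simp [← hyv, h])
    refine ⟨y, Finset.mem_erase.2 ⟨hyx, hy⟩, ?_⟩
    rw [Function.comp_apply, hyv, C.retract_coe]

theorem displays_eraseLeaf (hx : x ∈ E) {U' : Finset α} (hU' : (D.eraseLeaf C hx).Displays U') :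
    ∃ U, D.Displays U ∧ U' = U.erase x := by
  obtain ⟨hsub, u, v, huv, hU'⟩ := hU'
  have hleaf : ∀ c (hc : c ∈ E.erase x),
      (D.eraseLeaf C hx).leaf c = ⟨D.leaf c, D.leaf_mem_compl C hx hc⟩ :=
    fun c hc => C.retract_of_mem _
  rcases C.removeLeaf_adj.1 huv with hG | ⟨hu, hv⟩ | ⟨hu, hv⟩
  · refine D.exists_displays_erase_of_reachable_iff hsub hG fun c hc => (hU' c hc).trans ?_
    rw [hleaf c hc]
    exact C.reachable_removeLeaf_deleteEdges_iff hG _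
  · refine D.exists_displays_erase_of_reachable_iff hsub C.adj_b fun c hc => (hU' c hc).trans ?_
    rw [hleaf c hc]
    exact C.reachable_removeLeaf_deleteEdges_iff_of_coe_eq hu hv _
  · refine D.exists_displays_erase_of_reachable_iff hsub C.adj_a fun c hc => (hU' c hc).trans ?_
    rw [hleaf c hc]
    change ((D.G.removeLeaf _ w a b).deleteEdges _).Reachable _ _ ↔ _
    rw [removeLeaf_comm]
    exact C.symm.reachable_removeLeaf_deleteEdges_iff_of_coe_eq hu hv _

end EraseLeaf

end Decomp

namespace SetSystem

variable {α : Type}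

theorem ext {S T : SetSystem α} (hE : S.E = T.E) (hI : S.Ind = T.Ind) : S = T := by
  cases S; cases T; cases hE; cases hI; rfl

noncomputable def delete (S : SetSystem α) (x : α) : SetSystem α where
  E := S.E.erase x
  Ind := {X ∈ S.Ind | x ∉ X}
  ind_subset X hX := Finset.subset_erase.2 ⟨S.ind_subset X hX.1, hX.2⟩

@[simp] theorem delete_E (S : SetSystem α) (x : α) : (S.delete x).E = S.E.erase x := rfl

@[simp] theorem mem_delete_Ind {S : SetSystem α} {x : α} {X : Finset α} :
    X ∈ (S.delete x).Ind ↔ X ∈ S.Ind ∧ x ∉ X := Iff.rfl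

theorem Eqv.delete {S : SetSystem α} {U X Y : Finset α} {x : α} (h : S.Eqv U X Y) (hX : x ∉ X)
    (hY : x ∉ Y) : (S.delete x).Eqv (U.erase x) X Y := by
  intro Z hZ
  have hZ' : Z ⊆ S.E \ U := fun z hz => by
    have := hZ hz
    simp only [delete_E, Finset.mem_sdiff, Finset.mem_erase] at this ⊢
    tauto
  have hxZ : x ∉ Z := fun hx => by simpa using hZ hx
  simpa [hX, hY, hxZ] using h Z hZ'

theorem numClasses_delete_le (S : SetSystem α) (x : α) (U : Finset α) :
    (S.delete x).numClasses (U.erase x) ≤ S.numClasses U := by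
  -- `∼_U` refines `∼_(U - x)` on subsets of `U - x`, so choosing representatives sends the
  -- classes of `∼_U` onto those of `∼_(U - x)`
  let g : {X : Finset α // X ⊆ U.erase x} → Quotient (S.eqvSetoid U) :=
    fun X => ⟦⟨X, X.2.trans (Finset.erase_subset x U)⟩⟧
  have hg : ∀ X Y, g X = g Y → (⟦X⟧ : Quotient ((S.delete x).eqvSetoid (U.erase x))) = ⟦Y⟧ :=
    fun X Y h => Quotient.sound <| (Quotient.exact h).delete
      (fun hx => by simpa using X.2 hx) (fun hx => by simpa using Y.2 hx)
  have : Nonempty {X : Finset α // X ⊆ U.erase x} := ⟨⟨∅, Finset.empty_subset _⟩⟩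
  refine Nat.card_le_card_of_surjective (fun c => ⟦Function.invFun g c⟧) ?_
  rintro ⟨X⟩
  exact ⟨g X, hg _ _ (Function.invFun_eq ⟨X, rfl⟩)⟩

theorem dw_le_of_decomp {S : SetSystem α} {k : ℕ} (D : Decomp α S.E)
    (h : ∀ U, D.Displays U → S.numClasses U ≤ k) : S.dw ≤ k :=
  Nat.sInf_le ⟨D, h⟩

theorem exists_decomp_le_dw {S : SetSystem α} (D : Decomp α S.E) :
    ∃ D' : Decomp α S.E, ∀ U, D'.Displays U → S.numClasses U ≤ S.dw := by
  have hne : {k | ∃ D : Decomp α S.E, ∀ U, D.Displays U → S.numClasses U ≤ k}.Nonempty :=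
    ⟨S.E.powerset.sup S.numClasses, D, fun U hU => Finset.le_sup (Finset.mem_powerset.2 hU.1)⟩
  exact Nat.sInf_mem hne

theorem dw_eq_zero_of_isEmpty {S : SetSystem α} (h : IsEmpty (Decomp α S.E)) : S.dw = 0 := by
  rw [dw, Nat.sInf_eq_zero]
  exact Or.inr (Set.eq_empty_of_forall_notMem fun _ ⟨D, _⟩ => h.elim D)

theorem dw_delete_le (S : SetSystem α) {x : α} (hx : x ∈ S.E) : (S.delete x).dw ≤ S.dw := by
  rcases isEmpty_or_nonempty (Decomp α (S.E.erase x)) with h | h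
  · rw [dw_eq_zero_of_isEmpty h]
    exact Nat.zero_le _
  obtain ⟨D₀⟩ := h
  have hE : 3 ≤ S.E.card := by
    have := D₀.two_le_card
    rw [Finset.card_erase_of_mem hx] at this
    omega
  obtain ⟨D₁⟩ := Decomp.nonempty_of_erase hx D₀
  obtain ⟨D, hD⟩ := exists_decomp_le_dw D₁
  obtain ⟨w, a, b, C⟩ := D.exists_leafAtDegreeThree hx hE
  refine dw_le_of_decomp (D.eraseLeaf C hx) fun U' hU' => ?_
  obtain ⟨U, hU, rfl⟩ := D.displays_eraseLeaf C hx hU'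
  exact (S.numClasses_delete_le x U).trans (hD U hU)

end SetSystem

theorem Matroid.toSetSystem_del_singleton {α : Type} [Fintype α] (M : Matroid α) (x : α) :
    (M.del {x}).toSetSystem = M.toSetSystem.delete x := by
  refine SetSystem.ext (Finset.ext fun y => ?_) (Set.ext fun X => ?_)
  · simp [Matroid.toSetSystem, Matroid.del, and_comm]
  · simpa [Matroid.toSetSystem, Matroid.del, Set.subset_sdiff] using fun h _ => h.subset_ground

/-- deleting an element does not increase decomposition-width. -/
theorem statement_2 {α : Type} [Fintype α] (M : Matroid α) (x : α) (hx : x ∈ M.E) :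
    (M.del {x}).dw ≤ M.dw := by
  rw [Matroid.dw, Matroid.dw, M.toSetSystem_del_singleton x]
  exact M.toSetSystem.dw_delete_le (by simpa [Matroid.toSetSystem] using hx)
end

section
/- Let M be a finite matroid and let U be a subset of E(M). Then the equivalence relation ∼_U (with respect to the set-system (E(M), 𝓘(M)) of independent sets of M) has at least λ_M(U) + 1 equivalence classes. -/
open scoped Classical

/-!
Take a basis `J` of `E − U`, extend it to a base `B`, and extend `B − J ⊆ U` to a basis `I`
of `U`; then `λ(U) = |I| − |B − J|`. Every `X` with `B − J ⊆ X ⊆ I` completes to a base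
`X ∪ Z` with `Z ⊆ J ⊆ E − U`, and then `|X|` is the largest `|X'|` with `X' ⊆ U` and
`X' ∪ Z` independent. So `|X|` is an invariant of the class of `X`, and the sizes
`|B − J|, …, |I|` give `λ(U) + 1` distinct classes.
-/

namespace SetSystem

variable {α : Type}

lemma card_le_numClasses {S : SetSystem α} {U : Finset α} {ι : Type*} [Finite ι]
    (X : ι → {X : Finset α // X ⊆ U}) (hX : ∀ i j, S.Eqv U (X i) (X j) → i = j) :
    Nat.card ι ≤ S.numClasses U :=
  Nat.card_le_card_of_injective (fun i => (⟦X i⟧ : Quotient (S.eqvSetoid U)))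
    fun i j hij => hX i j (Quotient.exact hij)

end SetSystem

namespace Matroid

variable {α : Type} {M : Matroid α}

lemma sdiff_subset_of_isBasis_compl {U J B : Finset α} (hJ : M.IsBasis ↑J (M.E \ ↑U))
    (hB : M.IsBase ↑B) (hJB : J ⊆ B) : B \ J ⊆ U := by
  intro e he
  obtain ⟨heB, heJ⟩ := Finset.mem_sdiff.1 he
  by_contra heU
  have hBJ := hJ.inter_eq_of_subset_indep (by exact_mod_cast hJB) hB.indep
  exact heJ (hBJ.subset ⟨heB, hB.subset_ground heB, heU⟩)

variable [Fintype α]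

lemma rank_eq_card_of_isBasis' {I : Finset α} {S : Set α} (hI : M.IsBasis' ↑I S) :
    M.rank S = I.card := by
  refine IsGreatest.csSup_eq ⟨⟨I, hI.subset, hI.indep, rfl⟩, ?_⟩
  rintro _ ⟨X, hXS, hX, rfl⟩
  have := (hX.encard_le_eRk_of_subset hXS).trans_eq hI.encard_eq_eRk.symm
  simpa only [Set.encard_coe_eq_coe_finsetCard, Nat.cast_le] using this

lemma Indep.exists_isBase_union {X B : Finset α} (hX : M.Indep ↑X) (hB : M.IsBase ↑B) :
    ∃ Z ⊆ B \ X, M.IsBase ↑(X ∪ Z) := by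
  obtain ⟨B', hB', hXB', hB'XB⟩ := hX.exists_isBase_subset_union_isBase hB
  lift B' to Finset α using B'.toFinite
  refine ⟨B' \ X, fun e he => ?_, by rwa [Finset.union_sdiff_of_subset (by exact_mod_cast hXB')]⟩
  have : e ∈ X ∨ e ∈ B := by simpa using hB'XB (Finset.mem_sdiff.1 he).1
  simp only [Finset.mem_sdiff] at he ⊢
  tauto

section Connectivity

variable {U J B : Finset α}

lemma lambda_eq_card_sdiff {I : Finset α} (hJ : M.IsBasis ↑J (M.E \ ↑U)) (hB : M.IsBase ↑B)
    (hJB : J ⊆ B) (hI : M.IsBasis ↑I ↑U) : M.lambda ↑U = I.card - (B \ J).card := by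
  have := Finset.card_le_card hJB
  rw [lambda, rank_eq_card_of_isBasis' hI.isBasis', rank_eq_card_of_isBasis' hJ.isBasis',
    rank_eq_card_of_isBasis' hB.isBasis_ground.isBasis', Finset.card_sdiff_of_subset hJB]
  omega

lemma exists_isBase_union_of_sdiff_subset {X : Finset α} (hJ : ↑J ⊆ M.E \ ↑U)
    (hB : M.IsBase ↑B) (hBJX : B \ J ⊆ X) (hX : M.Indep ↑X) :
    ∃ Z : Finset α, ↑Z ⊆ M.E \ ↑U ∧ M.IsBase ↑(X ∪ Z) := by
  obtain ⟨Z, hZ, hXZ⟩ := hX.exists_isBase_union hB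
  refine ⟨Z, fun e he => hJ ?_, hXZ⟩
  obtain ⟨heB, heX⟩ := Finset.mem_sdiff.1 (hZ he)
  by_contra heJ
  exact heX (hBJX (Finset.mem_sdiff.2 ⟨heB, heJ⟩))

lemma card_le_of_eqv {X X' Z : Finset α} (hX' : X' ⊆ U) (hZ : ↑Z ⊆ M.E \ ↑U)
    (hXZ : M.IsBase ↑(X ∪ Z)) (h : M.toSetSystem.Eqv U X X') : X'.card ≤ X.card := by
  have hZE : Z ⊆ M.toSetSystem.E \ U := fun e he => by
    simpa [toSetSystem] using hZ he
  have hX'Z : M.Indep ↑(X' ∪ Z) := (h Z hZE).1 hXZ.indep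
  have hdisj : Disjoint X' Z := Finset.disjoint_left.2 fun e he heZ => (hZ heZ).2 (hX' he)
  have hle := hX'Z.encard_le_eRank.trans_eq hXZ.encard_eq_eRank.symm
  simp only [Set.encard_coe_eq_coe_finsetCard, Nat.cast_le] at hle
  have := Finset.card_union_le X Z
  rw [Finset.card_union_of_disjoint hdisj] at hle
  omega

lemma card_eq_of_eqv {X X' : Finset α} (hX : X ⊆ U) (hX' : X' ⊆ U)
    (hXB : ∃ Z : Finset α, ↑Z ⊆ M.E \ ↑U ∧ M.IsBase ↑(X ∪ Z))
    (hX'B : ∃ Z : Finset α, ↑Z ⊆ M.E \ ↑U ∧ M.IsBase ↑(X' ∪ Z))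
    (h : M.toSetSystem.Eqv U X X') : X.card = X'.card := by
  obtain ⟨Z, hZ, hXZ⟩ := hXB
  obtain ⟨Z', hZ', hX'Z'⟩ := hX'B
  exact (card_le_of_eqv hX hZ' hX'Z' fun Y hY => (h Y hY).symm).antisymm
    (card_le_of_eqv hX' hZ hXZ h)

lemma card_sdiff_add_one_le_numClasses {X₀ I : Finset α} (hX₀I : X₀ ⊆ I) (hIU : I ⊆ U)
    (hB : ∀ X, X₀ ⊆ X → X ⊆ I → ∃ Z : Finset α, ↑Z ⊆ M.E \ ↑U ∧ M.IsBase ↑(X ∪ Z)) :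
    I.card - X₀.card + 1 ≤ M.toSetSystem.numClasses U := by
  have hcard := Finset.card_le_card hX₀I
  have hX : ∀ k : Fin (I.card - X₀.card + 1),
      ∃ X, X₀ ⊆ X ∧ X ⊆ I ∧ X.card = X₀.card + k :=
    fun k => Finset.exists_subsuperset_card_eq hX₀I (by omega) (by omega)
  choose X hX₀X hXI hXcard using hX
  simpa using SetSystem.card_le_numClasses (fun k => ⟨X k, (hXI k).trans hIU⟩)
    fun k l hkl => by
      have := card_eq_of_eqv ((hXI k).trans hIU) ((hXI l).trans hIU)
        (hB _ (hX₀X k) (hXI k)) (hB _ (hX₀X l) (hXI l)) hkl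
      rw [hXcard, hXcard] at this
      exact Fin.ext (by omega)

end Connectivity

end Matroid

/-- Proposition `healer`: `∼_U` has at least `λ_M(U) + 1` equivalence
classes. -/
theorem statement_5 {α : Type} [Fintype α] (M : Matroid α) (U : Finset α)
    (hU : ↑U ⊆ M.E) :
    M.lambda ↑U + 1 ≤ M.toSetSystem.numClasses U := by
  obtain ⟨J, hJ⟩ := M.exists_isBasis (M.E \ ↑U)
  lift J to Finset α using J.toFinite
  obtain ⟨B, hB, hJB⟩ := hJ.indep.exists_isBase_superset
  lift B to Finset α using B.toFinite
  replace hJB : J ⊆ B := by exact_mod_cast hJB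
  have hBJU := Matroid.sdiff_subset_of_isBasis_compl hJ hB hJB
  have hBJ : M.Indep ↑(B \ J) := hB.indep.subset (Finset.coe_subset.2 Finset.sdiff_subset)
  obtain ⟨I, hI, hBJI⟩ := hBJ.subset_isBasis_of_subset (by exact_mod_cast hBJU) hU
  lift I to Finset α using I.toFinite
  rw [Matroid.lambda_eq_card_sdiff hJ hB hJB hI]
  exact Matroid.card_sdiff_add_one_le_numClasses (by exact_mod_cast hBJI)
    (by exact_mod_cast hI.subset) fun X hBJX hXI =>
      Matroid.exists_isBase_union_of_sdiff_subset hJ.subset hB hBJX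
        (hI.indep.subset (by exact_mod_cast hXI))
end
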